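/- arXiv:2310.00841 — 3 statements merged into one kernel-verified Lean document; each statement's English description precedes it below -/
import Mathlib

section
/- Let Ω be a nonempty finite type, let q be a probability mass function on Ω, let A ⊆ Ω, let N ≥ 1 be a natural number, and let φ, M be real numbers with 0 ≤ φ ≤ M and M > 0 such that q(A) := Σ_{ω ∈ A} q(ω) ≥ φ/M. Then the probability that N independent draws from q all miss A, namely (1 - q(A))^N, satisfies: (1 - q(A))^N ≤ 1 / (1 + N · log(M/(M - φ))) if φ ≠ M, and (1 - q(A))^N = 0 if φ = M. Logs are natural. -/
/-- Probabilistic content of Proposition 1: if `q` is a pmf on a nonempty finite type `Ω`,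
`A ⊆ Ω`, `N ≥ 1`, and `0 ≤ φ ≤ M`, `M > 0` with `q(A) ≥ φ/M`, then
`(1 - q(A))^N ≤ 1/(1 + N·log(M/(M-φ)))` if `φ ≠ M`, and `(1 - q(A))^N = 0` if `φ = M`. -/
theorem stmt_1 (Ω : Type*) [Fintype Ω] [Nonempty Ω]
    (q : Ω → ℝ) (hq0 : ∀ ω, 0 ≤ q ω) (hq1 : ∑ ω, q ω = 1)
    (A : Finset Ω) (N : ℕ) (hN : 1 ≤ N)
    (φ M : ℝ) (hφ0 : 0 ≤ φ) (hφM : φ ≤ M) (hM : 0 < M)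
    (hA : φ / M ≤ ∑ ω ∈ A, q ω) :
    (φ ≠ M →
      (1 - ∑ ω ∈ A, q ω) ^ N ≤ 1 / (1 + (N : ℝ) * Real.log (M / (M - φ)))) ∧
    (φ = M → (1 - ∑ ω ∈ A, q ω) ^ N = 0) := by
  set p : ℝ := ∑ ω ∈ A, q ω with hp
  have hp0 : 0 ≤ p := Finset.sum_nonneg fun ω _ => hq0 ω
  have hp1 : p ≤ 1 := by
    rw [← hq1]
    exact Finset.sum_le_sum_of_subset_of_nonneg (Finset.subset_univ A)
      (fun ω _ _ => hq0 ω)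
  constructor
  · intro hne
    have hφM' : φ < M := lt_of_le_of_ne hφM hne
    set c : ℝ := φ / M with hc
    have hc0 : 0 ≤ c := div_nonneg hφ0 hM.le
    have hc1 : c < 1 := (div_lt_one hM).mpr hφM'
    have h1c : 0 < 1 - c := by linarith
    have hMφ : 0 < M - φ := by linarith
    have hdeq : M / (M - φ) = 1 / (1 - c) := by
      rw [hc]
      field_simp
    have hL : Real.log (M / (M - φ)) = -Real.log (1 - c) := by
      rw [hdeq, one_div, Real.log_inv]
    set L : ℝ := Real.log (1 - c) with hLdef
    have hLle : L ≤ 0 := Real.log_nonpos h1c.le (by linarith)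
    have hNL : (N : ℝ) * L ≤ 0 :=
      mul_nonpos_of_nonneg_of_nonpos (Nat.cast_nonneg N) hLle
    have hden : 0 < 1 - (N : ℝ) * L := by linarith
    -- (1 - p)^N ≤ (1 - c)^N
    have hstep1 : (1 - p) ^ N ≤ (1 - c) ^ N :=
      pow_le_pow_left₀ (by linarith) (by linarith) N
    -- (1 - c)^N = exp (N * L)
    have hstep2 : (1 - c) ^ N = Real.exp ((N : ℝ) * L) := by
      rw [← Real.exp_log h1c, ← Real.exp_nat_mul]
    -- exp (N * L) ≤ 1 / (1 - N * L)
    have hkey : Real.exp ((N : ℝ) * L) ≤ 1 / (1 - (N : ℝ) * L) := by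
      rw [le_div_iff₀ hden]
      have h := Real.add_one_le_exp (-((N : ℝ) * L))
      calc Real.exp ((N : ℝ) * L) * (1 - (N : ℝ) * L)
          ≤ Real.exp ((N : ℝ) * L) * Real.exp (-((N : ℝ) * L)) := by
            apply mul_le_mul_of_nonneg_left _ (Real.exp_pos _).le
            linarith
        _ = 1 := by rw [← Real.exp_add]; simp
    rw [hL]
    have : 1 + (N : ℝ) * (-L) = 1 - (N : ℝ) * L := by ring
    rw [this]
    calc (1 - p) ^ N ≤ (1 - c) ^ N := hstep1
      _ = Real.exp ((N : ℝ) * L) := hstep2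
      _ ≤ 1 / (1 - (N : ℝ) * L) := hkey
  · intro heq
    have : (1 : ℝ) ≤ p := by
      rw [heq] at hA
      rwa [div_self hM.ne'] at hA
    have hp : p = 1 := le_antisymm hp1 this
    rw [hp, sub_self, zero_pow (by omega)]
end

section
/- Let Y and Z be nonempty finite types, let p be a strictly positive probability mass function on Y × Z, and for each z ∈ Z let q(·|z) be a strictly positive probability mass function on Y. Then the mutual information satisfies I(Y;Z) ≥ Σ_{y,z} p(y,z) · log q(y|z) + H(Y). -/
/-- Variational lower bound on mutual information: for a strictly positive joint pmf `p`
on `Y × Z` and, for each `z`, a strictly positive variational pmf `q(·|z)` on `Y`,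
`I(Y;Z) ≥ Σ_{y,z} p(y,z)·log q(y|z) + H(Y)`. -/
theorem stmt_3 (Y Z : Type*) [Fintype Y] [Fintype Z] [Nonempty Y] [Nonempty Z]
    (p : Y → Z → ℝ) (hp : ∀ y z, 0 < p y z) (hp1 : ∑ y, ∑ z, p y z = 1)
    (q : Z → Y → ℝ) (hq : ∀ z y, 0 < q z y) (hq1 : ∀ z, ∑ y, q z y = 1) :
    (∑ y, ∑ z, p y z * Real.log (q z y)) +
      (-(∑ y, (∑ z, p y z) * Real.log (∑ z, p y z))) ≤
    ∑ y, ∑ z, p y z * Real.log (p y z / ((∑ z', p y z') * (∑ y', p y' z))) := by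
  have hpY : ∀ y, 0 < ∑ z, p y z := fun y =>
    Finset.sum_pos (fun z _ => hp y z) Finset.univ_nonempty
  have hpZ : ∀ z, 0 < ∑ y, p y z := fun z =>
    Finset.sum_pos (fun y _ => hp y z) Finset.univ_nonempty
  rw [← sub_nonneg]
  have key : (∑ y, ∑ z, p y z * Real.log (p y z / ((∑ z', p y z') * (∑ y', p y' z)))) -
      ((∑ y, ∑ z, p y z * Real.log (q z y)) +
        (-(∑ y, (∑ z, p y z) * Real.log (∑ z, p y z)))) =
      ∑ y, ∑ z, p y z * Real.log (p y z / ((∑ y', p y' z) * q z y)) := by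
    have h1 : (∑ y, (∑ z, p y z) * Real.log (∑ z, p y z))
        = ∑ y, ∑ z, p y z * Real.log (∑ z', p y z') :=
      Finset.sum_congr rfl fun y _ => Finset.sum_mul ..
    rw [h1, sub_add_eq_sub_sub, sub_neg_eq_add, ← Finset.sum_sub_distrib,
      ← Finset.sum_add_distrib]
    refine Finset.sum_congr rfl fun y _ => ?_
    rw [← Finset.sum_sub_distrib, ← Finset.sum_add_distrib]
    refine Finset.sum_congr rfl fun z _ => ?_
    rw [← mul_sub, ← mul_add]
    congr 1
    rw [Real.log_div (hp y z).ne' (mul_pos (hpY y) (hpZ z)).ne',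
      Real.log_div (hp y z).ne' (mul_pos (hpZ z) (hq z y)).ne',
      Real.log_mul (hpY y).ne' (hpZ z).ne', Real.log_mul (hpZ z).ne' (hq z y).ne']
    ring
  rw [key]
  have hbound : ∀ y z, p y z - (∑ y', p y' z) * q z y ≤
      p y z * Real.log (p y z / ((∑ y', p y' z) * q z y)) := by
    intro y z
    have hr : 0 < (∑ y', p y' z) * q z y := mul_pos (hpZ z) (hq z y)
    have h := Real.log_le_sub_one_of_pos (div_pos hr (hp y z))
    have h2 := mul_le_mul_of_nonneg_left h (hp y z).le
    rw [Real.log_div hr.ne' (hp y z).ne'] at h2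
    have h3 : p y z * ((∑ y', p y' z) * q z y / p y z - 1)
        = (∑ y', p y' z) * q z y - p y z := by
      field_simp [(hp y z).ne']
    rw [h3] at h2
    rw [Real.log_div (hp y z).ne' hr.ne']
    nlinarith
  calc (0:ℝ) = ∑ y, ∑ z, (p y z - (∑ y', p y' z) * q z y) := by
        simp_rw [Finset.sum_sub_distrib]
        rw [hp1, Finset.sum_comm (f := fun y z => (∑ y', p y' z) * q z y)]
        simp_rw [← Finset.mul_sum, hq1, mul_one]
        rw [Finset.sum_comm (f := fun z y => p y z), hp1]
        ring
    _ ≤ _ := Finset.sum_le_sum fun y _ => Finset.sum_le_sum fun z _ => hbound y z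
end

section
/- Let G, Y, Z be nonempty finite types and let the joint probability mass function on G × Y × Z factorize as p(g,y,z) = a(g) · b(y|g) · c(z|g), where a is a strictly positive pmf on G and, for each g, b(·|g) and c(·|g) are strictly positive pmfs on Y and Z respectively. Let β ≥ 0 be real, for each z ∈ Z let q(·|z) be a strictly positive pmf on Y, and let u be a strictly positive pmf on Z. Then −I(Z;Y) + β·I(Z;G) ≤ Σ_{g,y,z} p(g,y,z)·(−log q(y|z)) − H(Y) + β·Σ_g a(g)·KL( c(·|g) ‖ u ), where I(Z;Y) and I(Z;G) are the mutual informations of the corresponding two-variable marginals of p, and H(Y) = −Σ_y p_Y(y)·log p_Y(y) with p_Y(y) = Σ_{g,z} p(g,y,z). -/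
open Finset

/-- Gibbs' inequality: nonnegativity of a KL-like sum. -/
lemma gibbs_aux {X : Type*} [Fintype X] (s t : X → ℝ)
    (hs : ∀ x, 0 < s x) (ht : ∀ x, 0 < t x)
    (hs1 : ∑ x, s x = 1) (ht1 : ∑ x, t x ≤ 1) :
    0 ≤ ∑ x, s x * Real.log (s x / t x) := by
  have key : ∀ x ∈ Finset.univ (α := X), -(s x * Real.log (s x / t x)) ≤ t x - s x := by
    intro x _
    have h := Real.log_le_sub_one_of_pos (div_pos (ht x) (hs x))
    have h2 : Real.log (t x / s x) = -Real.log (s x / t x) := by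
      rw [Real.log_div (ht x).ne' (hs x).ne', Real.log_div (hs x).ne' (ht x).ne']; ring
    have h3 : s x * Real.log (t x / s x) ≤ t x - s x := by
      have hmul := mul_le_mul_of_nonneg_left h (hs x).le
      have hfs : s x * (t x / s x - 1) = t x - s x := by
        rw [mul_sub, mul_one, mul_div_cancel₀ _ (hs x).ne']
      linarith [hfs ▸ hmul]
    rw [h2, mul_neg] at h3
    linarith
  have hsum := Finset.sum_le_sum key
  rw [Finset.sum_neg_distrib, Finset.sum_sub_distrib, hs1] at hsum
  linarith

/-- Discrete form of the paper's main variational bound (Eq. 5): under the Markov chain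
assumption `p(g,y,z) = a(g)·b(y|g)·c(z|g)`, for `β ≥ 0`, a strictly positive variational
predictor `q(·|z)` on `Y` for each `z`, and a strictly positive variational marginal `u`
on `Z`,
`−I(Z;Y) + β·I(Z;G) ≤ Σ_{g,y,z} p(g,y,z)·(−log q(y|z)) − H(Y) + β·Σ_g a(g)·KL(c(·|g) ‖ u)`. -/
theorem stmt_8 (G Y Z : Type*) [Fintype G] [Fintype Y] [Fintype Z]
    [Nonempty G] [Nonempty Y] [Nonempty Z]
    (a : G → ℝ) (b : G → Y → ℝ) (c : G → Z → ℝ)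
    (ha : ∀ g, 0 < a g) (ha1 : ∑ g, a g = 1)
    (hb : ∀ g y, 0 < b g y) (hb1 : ∀ g, ∑ y, b g y = 1)
    (hc : ∀ g z, 0 < c g z) (hc1 : ∀ g, ∑ z, c g z = 1)
    (p : G → Y → Z → ℝ) (hpdef : ∀ g y z, p g y z = a g * b g y * c g z)
    (pY : Y → ℝ) (hpY : ∀ y, pY y = ∑ g, ∑ z, p g y z)
    (β : ℝ) (hβ : 0 ≤ β)
    (q : Z → Y → ℝ) (hq : ∀ z y, 0 < q z y) (hq1 : ∀ z, ∑ y, q z y = 1)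
    (u : Z → ℝ) (hu : ∀ z, 0 < u z) (hu1 : ∑ z, u z = 1)
    (IZG IZY HY : ℝ)
    -- mutual information of the (G,Z)-marginal
    (hIZG : IZG = ∑ g, ∑ z, (∑ y, p g y z) *
      Real.log ((∑ y, p g y z) /
        ((∑ z', ∑ y, p g y z') * (∑ g', ∑ y, p g' y z))))
    -- mutual information of the (Y,Z)-marginal
    (hIZY : IZY = ∑ y, ∑ z, (∑ g, p g y z) *
      Real.log ((∑ g, p g y z) /
        ((∑ z', ∑ g, p g y z') * (∑ y', ∑ g, p g y' z))))
    -- entropy of the Y-marginal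
    (hHY : HY = -∑ y, pY y * Real.log (pY y)) :
    -IZY + β * IZG ≤
      (∑ g, ∑ y, ∑ z, p g y z * (-Real.log (q z y))) - HY +
        β * ∑ g, a g * (∑ z, c g z * Real.log (c g z / u z)) := by
  classical
  simp only [hpdef] at hIZG hIZY hpY ⊢
  -- abstract the Z-marginal
  obtain ⟨pZ, hpZ⟩ : ∃ f : Z → ℝ, ∀ z, f z = ∑ g, a g * c g z := ⟨_, fun _ => rfl⟩
  -- abstract the (Y,Z)-marginal
  obtain ⟨pYZ, hpYZ⟩ : ∃ f : Y → Z → ℝ, ∀ y z, f y z = ∑ g, a g * b g y * c g z :=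
    ⟨_, fun _ _ => rfl⟩
  have hpZpos : ∀ z, 0 < pZ z := fun z => by
    rw [hpZ]; exact Finset.sum_pos (fun g _ => mul_pos (ha g) (hc g z)) Finset.univ_nonempty
  have hpZ1 : ∑ z, pZ z = 1 := by
    simp only [hpZ]
    rw [Finset.sum_comm]
    simp only [← Finset.mul_sum, hc1, mul_one]; exact ha1
  have hpYZpos : ∀ y z, 0 < pYZ y z := fun y z => by
    rw [hpYZ]
    exact Finset.sum_pos (fun g _ => mul_pos (mul_pos (ha g) (hb g y)) (hc g z))
      Finset.univ_nonempty
  -- pY in simple form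
  have hpY' : ∀ y, pY y = ∑ g, a g * b g y := by
    intro y
    rw [hpY]
    refine Finset.sum_congr rfl fun g _ => ?_
    simp only [mul_assoc, ← Finset.mul_sum, hc1, mul_one]
  have hpYpos : ∀ y, 0 < pY y := fun y => by
    rw [hpY']; exact Finset.sum_pos (fun g _ => mul_pos (ha g) (hb g y)) Finset.univ_nonempty
  -- marginals of pYZ
  have hsumz : ∀ y, ∑ z, pYZ y z = pY y := by
    intro y
    simp only [hpYZ]
    rw [hpY y, Finset.sum_comm]
  have hsumy : ∀ z, ∑ y, pYZ y z = pZ z := by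
    intro z
    simp only [hpYZ]
    rw [hpZ, Finset.sum_comm]
    refine Finset.sum_congr rfl fun g _ => ?_
    have : ∀ y, a g * b g y * c g z = (a g * c g z) * b g y := fun y => by ring
    rw [Finset.sum_congr rfl fun y _ => this y, ← Finset.mul_sum, hb1, mul_one]
  have hpYZ1 : ∑ y, ∑ z, pYZ y z = 1 := by
    simp only [hsumz]
    have : (∑ y, pY y) = ∑ y, ∑ g, a g * b g y := Finset.sum_congr rfl fun y _ => hpY' y
    rw [this, Finset.sum_comm]
    simp only [← Finset.mul_sum, hb1, mul_one]; exact ha1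
  -- Y-marginal of the joint over y: ∑ y, a g * b g y * c g z = a g * c g z
  have hmargy : ∀ g z, (∑ y, a g * b g y * c g z) = a g * c g z := by
    intro g z
    have : ∀ y, a g * b g y * c g z = (a g * c g z) * b g y := fun y => by ring
    rw [Finset.sum_congr rfl fun y _ => this y, ← Finset.mul_sum, hb1, mul_one]
  have hmargz : ∀ g, (∑ z, a g * c g z) = a g := by
    intro g; rw [← Finset.mul_sum, hc1, mul_one]
  -- simplified IZG
  have hIZG' : IZG = ∑ g, ∑ z, (a g * c g z) * Real.log (c g z / pZ z) := by
    rw [hIZG]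
    refine Finset.sum_congr rfl fun g _ => Finset.sum_congr rfl fun z _ => ?_
    have e2 : (∑ z', ∑ y, a g * b g y * c g z') = a g := by
      simp only [hmargy]; exact hmargz g
    have e3 : (∑ g', ∑ y, a g' * b g' y * c g' z) = pZ z := by
      simp only [hmargy]; exact (hpZ z).symm
    rw [hmargy g z, e2, e3, mul_div_mul_left _ _ (ha g).ne']
  -- simplified IZY
  have hIZY' : IZY = ∑ y, ∑ z, pYZ y z * Real.log (pYZ y z / (pY y * pZ z)) := by
    rw [hIZY]
    refine Finset.sum_congr rfl fun y _ => Finset.sum_congr rfl fun z _ => ?_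
    have e2 : (∑ z', ∑ g, a g * b g y * c g z') = pY y := by
      simp only [← hpYZ]; exact hsumz y
    have e3 : (∑ y', ∑ g, a g * b g y' * c g z) = pZ z := by
      simp only [← hpYZ]; exact hsumy z
    rw [(hpYZ y z).symm, e2, e3]
  -- the NLL term in (Y,Z)-marginal form
  have hNLL : (∑ g, ∑ y, ∑ z, a g * b g y * c g z * (-Real.log (q z y)))
      = ∑ y, ∑ z, pYZ y z * (-Real.log (q z y)) := by
    rw [Finset.sum_comm]
    refine Finset.sum_congr rfl fun y _ => ?_
    rw [Finset.sum_comm]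
    refine Finset.sum_congr rfl fun z _ => ?_
    rw [hpYZ y z, Finset.sum_mul]
  -- β-part: KL sum minus IZG equals KL(pZ ‖ u)
  have hKLB : (∑ g, a g * (∑ z, c g z * Real.log (c g z / u z))) - IZG
      = ∑ z, pZ z * Real.log (pZ z / u z) := by
    rw [hIZG', ← Finset.sum_sub_distrib]
    have step : ∀ g, a g * (∑ z, c g z * Real.log (c g z / u z))
        - (∑ z, (a g * c g z) * Real.log (c g z / pZ z))
        = ∑ z, (a g * c g z) * Real.log (pZ z / u z) := by
      intro g
      rw [Finset.mul_sum, ← Finset.sum_sub_distrib]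
      refine Finset.sum_congr rfl fun z _ => ?_
      rw [Real.log_div (hc g z).ne' (hu z).ne', Real.log_div (hc g z).ne' (hpZpos z).ne',
        Real.log_div (hpZpos z).ne' (hu z).ne']
      ring
    have hstep : (∑ g, (a g * (∑ z, c g z * Real.log (c g z / u z))
        - ∑ z, (a g * c g z) * Real.log (c g z / pZ z)))
        = ∑ g, ∑ z, (a g * c g z) * Real.log (pZ z / u z) :=
      Finset.sum_congr rfl fun g _ => step g
    rw [hstep, Finset.sum_comm]
    refine Finset.sum_congr rfl fun z _ => ?_
    rw [hpZ z, Finset.sum_mul]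
  have hBnn : 0 ≤ ∑ z, pZ z * Real.log (pZ z / u z) :=
    gibbs_aux pZ u hpZpos hu hpZ1 hu1.le
  -- A-part: NLL - HY + IZY equals a KL on Y × Z
  have hAnn : 0 ≤ ∑ y, ∑ z, pYZ y z * Real.log (pYZ y z / (pZ z * q z y)) := by
    have h := gibbs_aux (X := Y × Z) (fun x => pYZ x.1 x.2) (fun x => pZ x.2 * q x.2 x.1)
      (fun x => hpYZpos x.1 x.2) (fun x => mul_pos (hpZpos x.2) (hq x.2 x.1))
      (by rw [Fintype.sum_prod_type]; exact hpYZ1)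
      (by
        rw [Fintype.sum_prod_type, Finset.sum_comm]
        have h0 : ∀ z, (∑ y, pZ z * q z y) = pZ z := fun z => by
          rw [← Finset.mul_sum, hq1, mul_one]
        have h1 : (∑ z, ∑ y, pZ z * q z y) = ∑ z, pZ z :=
          Finset.sum_congr rfl fun z _ => h0 z
        rw [h1, hpZ1])
    rw [Fintype.sum_prod_type] at h
    exact h
  have hA : (∑ y, ∑ z, pYZ y z * (-Real.log (q z y))) - HY + IZY
      = ∑ y, ∑ z, pYZ y z * Real.log (pYZ y z / (pZ z * q z y)) := by
    rw [hHY, hIZY']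
    have hHY' : (∑ y, pY y * Real.log (pY y))
        = ∑ y, ∑ z, pYZ y z * Real.log (pY y) := by
      refine Finset.sum_congr rfl fun y _ => ?_
      rw [← hsumz y, Finset.sum_mul]
    rw [sub_neg_eq_add, hHY']
    rw [← Finset.sum_add_distrib, ← Finset.sum_add_distrib]
    refine Finset.sum_congr rfl fun y _ => ?_
    rw [← Finset.sum_add_distrib, ← Finset.sum_add_distrib]
    refine Finset.sum_congr rfl fun z _ => ?_
    rw [Real.log_div (hpYZpos y z).ne' (mul_pos (hpYpos y) (hpZpos z)).ne',
      Real.log_div (hpYZpos y z).ne' (mul_pos (hpZpos z) (hq z y)).ne',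
      Real.log_mul (hpYpos y).ne' (hpZpos z).ne',
      Real.log_mul (hpZpos z).ne' (hq z y).ne']
    ring
  -- conclude
  rw [hNLL]
  have h1 : 0 ≤ (∑ g, a g * (∑ z, c g z * Real.log (c g z / u z))) - IZG := by
    rw [hKLB]; exact hBnn
  have h2 : 0 ≤ (∑ y, ∑ z, pYZ y z * (-Real.log (q z y))) - HY + IZY := by
    rw [hA]; exact hAnn
  nlinarith [mul_nonneg hβ h1]
end
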